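/- Let (X,d) be a metric space, let {K_i} be a collection of pairwise disjoint subsets of X, and for each i let A_i be a subset with K_i ⊆ A_i (the A_i also pairwise disjoint). Let d₁ denote the electric pseudometric on X obtained by electrocuting the collection {K_i}, and let d₂ denote the electric pseudometric on X obtained by electrocuting the collection {A_i}. Suppose there exists m ≥ 0 such that for every i, each point of A_i lies within d₁-distance m of K_i. Then the identity map of X is a quasi-isometry from (X, d₁) to (X, d₂); in fact d₂(x,y) ≤ d₁(x,y) and d₁(x,y) ≤ (2m+1)·d₂(x,y) for all x, y ∈ X. -/

import Mathlib

open Set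
open scoped Classical ENNReal

/-- `γ` is a geodesic segment from `x` to `y`, parametrized by arclength on `[0, dist x y]`. -/
def IsGeodesicSeg {X : Type} [MetricSpace X] (γ : ℝ → X) (x y : X) : Prop :=
  γ 0 = x ∧ γ (dist x y) = y ∧
    ∀ s ∈ Set.Icc (0 : ℝ) (dist x y), ∀ t ∈ Set.Icc (0 : ℝ) (dist x y),
      dist (γ s) (γ t) = |s - t|

/-- The image (underlying set) of a geodesic segment from `x` to `y`. -/
def geodImage {X : Type} [MetricSpace X] (γ : ℝ → X) (x y : X) : Set X :=
  γ '' Set.Icc (0 : ℝ) (dist x y)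

/-- A geodesic metric space: any two points are joined by a geodesic segment. -/
def GeodesicMS (X : Type) [MetricSpace X] : Prop :=
  ∀ x y : X, ∃ γ : ℝ → X, IsGeodesicSeg γ x y

/-- `X` is δ-hyperbolic: all geodesic triangles are δ-thin, i.e. each side lies in the
δ-neighborhood of the union of the other two sides. -/
def DeltaHyperbolic (X : Type) [MetricSpace X] (δ : ℝ) : Prop :=
  ∀ (x y z : X) (γ₁ γ₂ γ₃ : ℝ → X),
    IsGeodesicSeg γ₁ x y → IsGeodesicSeg γ₂ y z → IsGeodesicSeg γ₃ x z →
    ∀ p ∈ geodImage γ₃ x z, ∃ q ∈ geodImage γ₁ x y ∪ geodImage γ₂ y z, dist p q ≤ δ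

/-- A subset `Z` is C-quasiconvex: every geodesic segment joining two points of `Z` lies
in the C-neighborhood of `Z`. -/
def QuasiconvexSubset {X : Type} [MetricSpace X] (C : ℝ) (Z : Set X) : Prop :=
  ∀ x ∈ Z, ∀ y ∈ Z, ∀ γ : ℝ → X, IsGeodesicSeg γ x y →
    ∀ p ∈ geodImage γ x y, ∃ z ∈ Z, dist p z ≤ C

/-- A collection of subsets is D-separated: distinct members are at distance at least `D`. -/
def SeparatedColl {X : Type} [MetricSpace X] (D : ℝ) (𝓗 : Set (Set X)) : Prop :=
  ∀ H₁ ∈ 𝓗, ∀ H₂ ∈ 𝓗, H₁ ≠ H₂ → ∀ a ∈ H₁, ∀ b ∈ H₂, D ≤ dist a b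

/-- The cost of a single step of an electric chain: a step both of whose endpoints lie in a
common electrocuted set costs at most `1`; any other step costs the distance between its
endpoints. -/
noncomputable def elecStep {X : Type} [MetricSpace X] (𝓗 : Set (Set X)) (a b : X) : ℝ :=
  if ∃ H ∈ 𝓗, a ∈ H ∧ b ∈ H then min 1 (dist a b) else dist a b

/-- The electric (coned-off) pseudometric obtained by electrocuting the members of `𝓗`:
the infimum of total costs of finite chains from `x` to `y`. -/
noncomputable def elecDist {X : Type} [MetricSpace X] (𝓗 : Set (Set X)) (x y : X) : ℝ :=
  sInf { r : ℝ | ∃ (n : ℕ) (c : ℕ → X), c 0 = x ∧ c n = y ∧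
    r = ∑ i ∈ Finset.range n, elecStep 𝓗 (c i) (c (i + 1)) }

/-- `β`, parametrized on `[0,T]`, is a P-quasigeodesic for the electric pseudometric. -/
def ElecQuasigeodesic {X : Type} [MetricSpace X] (𝓗 : Set (Set X)) (P : ℝ)
    (β : ℝ → X) (T : ℝ) : Prop :=
  ∀ s ∈ Set.Icc (0 : ℝ) T, ∀ t ∈ Set.Icc (0 : ℝ) T,
    (1 / P) * |s - t| - P ≤ elecDist 𝓗 (β s) (β t) ∧
      elecDist 𝓗 (β s) (β t) ≤ P * |s - t| + P

/-- `β` does not backtrack: it never returns to a member of `𝓗` after leaving it. -/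
def NoBacktracking {X : Type} [MetricSpace X] (𝓗 : Set (Set X)) (β : ℝ → X) (T : ℝ) : Prop :=
  ∀ H ∈ 𝓗, ∀ s t u : ℝ, 0 ≤ s → s ≤ t → t ≤ u → u ≤ T → β s ∈ H → β u ∈ H → β t ∈ H

/-!
Every electric chain for `{K i}` is one for `{A i}`, and since each `K i` lies in `A i` none of
its steps becomes more expensive; this gives `d₂ ≤ d₁`. Conversely, a step of cost `1` between
two points `a, b` of a common `A i` can be replaced by the `d₁`-route `a → k_a → k_b → b`
through nearby points of `K i`, of `d₁`-length at most `2m + 1`. So `d₁` is bounded by `2m + 1`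
times the cost of every single step of a `d₂`-chain, and summing along the chain by the triangle
inequality for `d₁` gives `d₁ ≤ (2m + 1) d₂`.
-/

section ChainAppend

variable {X : Type}

def chainAppend (n : ℕ) (c c' : ℕ → X) : ℕ → X :=
  fun i => if i ≤ n then c i else c' (i - n)

lemma chainAppend_of_le {n i : ℕ} (c c' : ℕ → X) (hi : i ≤ n) : chainAppend n c c' i = c i :=
  if_pos hi

lemma chainAppend_add {n : ℕ} {c c' : ℕ → X} (h : c n = c' 0) (i : ℕ) :
    chainAppend n c c' (n + i) = c' i := by
  rcases Nat.eq_zero_or_pos i with rfl | hi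
  · simpa [chainAppend] using h
  · rw [chainAppend, if_neg (by omega), Nat.add_sub_cancel_left]

end ChainAppend

section ElectricPseudometric

variable {X : Type} [MetricSpace X] (𝓗 : Set (Set X))

noncomputable def chainCost (n : ℕ) (c : ℕ → X) : ℝ :=
  ∑ i ∈ Finset.range n, elecStep 𝓗 (c i) (c (i + 1))

lemma elecStep_nonneg (a b : X) : 0 ≤ elecStep 𝓗 a b := by
  unfold elecStep
  split_ifs
  · exact le_min zero_le_one dist_nonneg
  · exact dist_nonneg

lemma elecStep_le_dist (a b : X) : elecStep 𝓗 a b ≤ dist a b := by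
  unfold elecStep
  split_ifs
  · exact min_le_right _ _
  · exact le_rfl

lemma elecStep_le_one_of_mem {H : Set X} (hH : H ∈ 𝓗) {a b : X} (ha : a ∈ H) (hb : b ∈ H) :
    elecStep 𝓗 a b ≤ 1 := by
  rw [elecStep, if_pos ⟨H, hH, ha, hb⟩]
  exact min_le_left _ _

lemma elecStep_comm (a b : X) : elecStep 𝓗 a b = elecStep 𝓗 b a := by
  simp only [elecStep, dist_comm a b, and_comm]

lemma elecStep_anti {𝓖 : Set (Set X)} (h : ∀ H ∈ 𝓗, ∃ G ∈ 𝓖, H ⊆ G) (a b : X) :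
    elecStep 𝓖 a b ≤ elecStep 𝓗 a b := by
  unfold elecStep
  split_ifs with hG hH hH
  · exact le_rfl
  · exact min_le_right _ _
  · obtain ⟨H, hH𝓗, ha, hb⟩ := hH
    obtain ⟨G, hG𝓖, hHG⟩ := h H hH𝓗
    exact absurd ⟨G, hG𝓖, hHG ha, hHG hb⟩ hG
  · exact le_rfl

lemma chainCost_nonneg (n : ℕ) (c : ℕ → X) : 0 ≤ chainCost 𝓗 n c :=
  Finset.sum_nonneg fun _ _ => elecStep_nonneg 𝓗 _ _

lemma chainCost_append {n n' : ℕ} {c c' : ℕ → X} (h : c n = c' 0) :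
    chainCost 𝓗 (n + n') (chainAppend n c c') = chainCost 𝓗 n c + chainCost 𝓗 n' c' := by
  unfold chainCost
  rw [Finset.sum_range_add]
  congr 1
  · refine Finset.sum_congr rfl fun i hi => ?_
    have hi : i < n := Finset.mem_range.1 hi
    rw [chainAppend_of_le c c' hi.le, chainAppend_of_le c c' hi]
  · refine Finset.sum_congr rfl fun i _ => ?_
    rw [chainAppend_add h, add_assoc, chainAppend_add h]

lemma chainCost_reverse (n : ℕ) (c : ℕ → X) :
    chainCost 𝓗 n (fun i => c (n - i)) = chainCost 𝓗 n c := by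
  rw [chainCost, ← Finset.sum_range_reflect]
  refine Finset.sum_congr rfl fun i hi => ?_
  have hi : i < n := Finset.mem_range.1 hi
  rw [show n - (n - 1 - i) = i + 1 by omega, show n - (n - 1 - i + 1) = i by omega,
    elecStep_comm]

lemma elecDist_le_chainCost {x y : X} {n : ℕ} {c : ℕ → X} (h0 : c 0 = x) (hn : c n = y) :
    elecDist 𝓗 x y ≤ chainCost 𝓗 n c :=
  csInf_le ⟨0, by rintro r ⟨n, c, -, -, rfl⟩; exact chainCost_nonneg 𝓗 n c⟩ ⟨n, c, h0, hn, rfl⟩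

lemma le_elecDist {r : ℝ} {x y : X}
    (h : ∀ (n : ℕ) (c : ℕ → X), c 0 = x → c n = y → r ≤ chainCost 𝓗 n c) :
    r ≤ elecDist 𝓗 x y := by
  refine le_csInf ⟨_, 1, fun i => if i = 0 then x else y, rfl, rfl, rfl⟩ ?_
  rintro r ⟨n, c, h0, hn, rfl⟩
  exact h n c h0 hn

lemma elecDist_nonneg (x y : X) : 0 ≤ elecDist 𝓗 x y :=
  le_elecDist 𝓗 fun n c _ _ => chainCost_nonneg 𝓗 n c

lemma elecDist_le_elecStep (x y : X) : elecDist 𝓗 x y ≤ elecStep 𝓗 x y := by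
  have := elecDist_le_chainCost 𝓗 (n := 1) (c := fun i => if i = 0 then x else y) rfl rfl
  simpa [chainCost] using this

lemma elecDist_le_dist (x y : X) : elecDist 𝓗 x y ≤ dist x y :=
  (elecDist_le_elecStep 𝓗 x y).trans (elecStep_le_dist 𝓗 x y)

lemma elecDist_self_nonpos (x : X) : elecDist 𝓗 x x ≤ 0 :=
  elecDist_le_chainCost 𝓗 (n := 0) (c := fun _ => x) rfl rfl

lemma elecDist_triangle (x y z : X) :
    elecDist 𝓗 x z ≤ elecDist 𝓗 x y + elecDist 𝓗 y z := by
  suffices elecDist 𝓗 x z - elecDist 𝓗 y z ≤ elecDist 𝓗 x y by linarith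
  refine le_elecDist 𝓗 fun n c h0 hn => ?_
  suffices elecDist 𝓗 x z - chainCost 𝓗 n c ≤ elecDist 𝓗 y z by linarith
  refine le_elecDist 𝓗 fun n' c' h0' hn' => ?_
  have hc : c n = c' 0 := hn.trans h0'.symm
  have hjoin := elecDist_le_chainCost 𝓗 (chainAppend_of_le c c' n.zero_le ▸ h0)
    (hn' ▸ chainAppend_add hc n')
  rw [chainCost_append 𝓗 hc] at hjoin
  linarith

lemma elecDist_comm (x y : X) : elecDist 𝓗 x y = elecDist 𝓗 y x := by
  have key : ∀ x y : X, elecDist 𝓗 x y ≤ elecDist 𝓗 y x := fun x y =>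
    le_elecDist 𝓗 fun n c h0 hn => by
      simpa only [chainCost_reverse] using
        elecDist_le_chainCost 𝓗 (x := x) (y := y) (n := n) (c := fun i => c (n - i)) (by simpa using hn)
          (by simpa using h0)
  exact le_antisymm (key x y) (key y x)

lemma elecDist_le_sum_elecDist (n : ℕ) (c : ℕ → X) :
    elecDist 𝓗 (c 0) (c n) ≤ ∑ i ∈ Finset.range n, elecDist 𝓗 (c i) (c (i + 1)) := by
  induction n with
  | zero => simpa using elecDist_self_nonpos 𝓗 (c 0)
  | succ n ih =>
    rw [Finset.sum_range_succ]
    linarith [elecDist_triangle 𝓗 (c 0) (c n) (c (n + 1))]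

end ElectricPseudometric

section Comparison

variable {X : Type} [MetricSpace X] {𝓗 𝓖 : Set (Set X)}

lemma elecDist_le_mul_elecDist_of_le_elecStep {C : ℝ} (hC : 0 < C)
    (h : ∀ a b, elecDist 𝓖 a b ≤ C * elecStep 𝓗 a b) (x y : X) :
    elecDist 𝓖 x y ≤ C * elecDist 𝓗 x y := by
  rw [← div_le_iff₀' hC]
  refine le_elecDist 𝓗 fun n c h0 hn => ?_
  rw [div_le_iff₀' hC, chainCost, Finset.mul_sum, ← h0, ← hn]
  exact (elecDist_le_sum_elecDist 𝓖 n c).trans (Finset.sum_le_sum fun i _ => h _ _)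

lemma elecDist_anti (h : ∀ H ∈ 𝓗, ∃ G ∈ 𝓖, H ⊆ G) (x y : X) :
    elecDist 𝓖 x y ≤ elecDist 𝓗 x y := by
  simpa only [one_mul] using elecDist_le_mul_elecDist_of_le_elecStep one_pos
    (fun a b => by simpa only [one_mul] using
      (elecDist_le_elecStep 𝓖 a b).trans (elecStep_anti 𝓗 h a b)) x y

lemma elecDist_le_of_mem_of_close {m : ℝ} {A K : Set X} (hK : K ∈ 𝓗)
    (hclose : ∀ a ∈ A, ∃ k ∈ K, elecDist 𝓗 a k ≤ m) {a b : X} (ha : a ∈ A) (hb : b ∈ A) :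
    elecDist 𝓗 a b ≤ 2 * m + 1 := by
  obtain ⟨ka, hka, hma⟩ := hclose a ha
  obtain ⟨kb, hkb, hmb⟩ := hclose b hb
  have hk : elecDist 𝓗 ka kb ≤ 1 :=
    (elecDist_le_elecStep 𝓗 ka kb).trans (elecStep_le_one_of_mem 𝓗 hK hka hkb)
  linarith [elecDist_triangle 𝓗 a ka b, elecDist_triangle 𝓗 ka kb b, elecDist_comm 𝓗 kb b]

lemma elecDist_le_mul_elecStep {m : ℝ} (hm : 0 ≤ m)
    (hclose : ∀ A ∈ 𝓖, ∃ K ∈ 𝓗, ∀ a ∈ A, ∃ k ∈ K, elecDist 𝓗 a k ≤ m) (a b : X) :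
    elecDist 𝓗 a b ≤ (2 * m + 1) * elecStep 𝓖 a b := by
  have hdist : elecDist 𝓗 a b ≤ (2 * m + 1) * dist a b :=
    (elecDist_le_dist 𝓗 a b).trans (le_mul_of_one_le_left dist_nonneg (by linarith))
  by_cases hab : ∃ A ∈ 𝓖, a ∈ A ∧ b ∈ A
  · obtain ⟨A, hA, ha, hb⟩ := hab
    obtain ⟨K, hK, hAK⟩ := hclose A hA
    rw [elecStep, if_pos ⟨A, hA, ha, hb⟩]
    rcases le_total (dist a b) 1 with hd | hd
    · rwa [min_eq_right hd]
    · rw [min_eq_left hd, mul_one]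
      exact elecDist_le_of_mem_of_close hK hAK ha hb
  · rwa [elecStep, if_neg hab]

end Comparison

theorem electrocution_comparison_general (X : Type) [MetricSpace X] (ι : Type)
    (K A : ι → Set X) (m : ℝ) (hm : 0 ≤ m)
    (hKA : ∀ i, K i ⊆ A i)
    (hclose : ∀ i, ∀ a ∈ A i, ∃ k ∈ K i, elecDist (Set.range K) a k ≤ m) :
    ∀ x y : X,
      elecDist (Set.range A) x y ≤ elecDist (Set.range K) x y ∧
        elecDist (Set.range K) x y ≤ (2 * m + 1) * elecDist (Set.range A) x y := by
  intro x y
  constructor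
  · refine elecDist_anti ?_ x y
    rintro _ ⟨i, rfl⟩
    exact ⟨A i, ⟨i, rfl⟩, hKA i⟩
  · have hcloseA : ∀ H ∈ Set.range A, ∃ G ∈ Set.range K, ∀ a ∈ H, ∃ k ∈ G,
        elecDist (Set.range K) a k ≤ m := by
      rintro _ ⟨i, rfl⟩
      exact ⟨K i, ⟨i, rfl⟩, hclose i⟩
    exact elecDist_le_mul_elecDist_of_le_elecStep (by linarith)
      (elecDist_le_mul_elecStep hm hcloseA) x y

/-- Let `{K i}` be a pairwise disjoint collection of subsets of a metric
space `X` and `{A i}` a pairwise disjoint collection with `K i ⊆ A i`. Let `d₁` be the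
electric pseudometric electrocuting the `K i` and `d₂` the one electrocuting the `A i`.
If there exists `m ≥ 0` such that every point of `A i` lies within `d₁`-distance `m` of
`K i`, then the identity is a quasi-isometry from `(X,d₁)` to `(X,d₂)`; in fact
`d₂(x,y) ≤ d₁(x,y)` and `d₁(x,y) ≤ (2m+1)·d₂(x,y)` for all `x, y`. -/
theorem electrocution_comparison (X : Type) [MetricSpace X] (ι : Type)
    (K A : ι → Set X) (m : ℝ) (hm : 0 ≤ m)
    (hKdisj : ∀ i j, i ≠ j → Disjoint (K i) (K j))
    (hAdisj : ∀ i j, i ≠ j → Disjoint (A i) (A j))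
    (hKA : ∀ i, K i ⊆ A i)
    (hclose : ∀ i, ∀ a ∈ A i, ∃ k ∈ K i, elecDist (Set.range K) a k ≤ m) :
    ∀ x y : X,
      elecDist (Set.range A) x y ≤ elecDist (Set.range K) x y ∧
        elecDist (Set.range K) x y ≤ (2 * m + 1) * elecDist (Set.range A) x y :=
  electrocution_comparison_general X ι K A m hm hKA hclose
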